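/- For all integers n ≥ k ≥ 1, the number of increasing ordered trees with n edges whose rightmost path from the root has length at least k equals binomial(2n-k, k) * (2n-2k-1)!!, where (-1)!! = 1. -/

import Mathlib

open Nat

/-- Rooted plane (ordered) trees with natural-number vertex labels. -/
inductive LTree where
  | node : ℕ → List LTree → LTree

namespace LTree

/-- The label of the root. -/
def rootLabel : LTree → ℕ
  | .node a _ => a

mutual
  /-- The list of all vertex labels of a tree (preorder). -/
  def labels : LTree → List ℕ
    | .node a ts => a :: labelsList ts
  def labelsList : List LTree → List ℕ
    | [] => []
    | t :: ts => labels t ++ labelsList ts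
end

mutual
  /-- Labels strictly increase along every path away from the root. -/
  def Incr : LTree → Prop
    | .node a ts => IncrList a ts
  def IncrList : ℕ → List LTree → Prop
    | _, [] => True
    | a, .node b us :: ts => a < b ∧ Incr (.node b us) ∧ IncrList a ts
end

mutual
  /-- The length of the rightmost path from the root. -/
  def rlen : LTree → ℕ
    | .node _ ts => rlenList ts
  def rlenList : List LTree → ℕ
    | [] => 0
    | [t] => 1 + rlen t
    | _ :: t :: ts => rlenList (t :: ts)
end

end LTree

/-!
Removing the vertex with the largest label `n` (necessarily a leaf) from an increasing tree with
`n` edges gives one with `n - 1` edges, and remembering the gap of the contour word where the leaf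
sat makes this a bijection onto pairs (tree, one of its `2n - 1` gaps). If the smaller tree has
rightmost path of length `s`, its last `s + 1` gaps hang the leaf below the vertices of that path,
producing rightmost paths of lengths `s + 1, …, 1`, and every other gap keeps length `s`. Counting
gaps gives `c(n+1, k+1) = (2n-k) c(n, k+1) + c(n, k)` and `c(n+1, 0) = (2n+1) c(n, 0)`, and the
closed formula satisfies the same recursion by Pascal's rule and
`C(N+1, k+1) (N-k) = (N+1) C(N, k+1)`.
-/

namespace LTree

theorem forest_induction {P : List LTree → Prop} (nil : P [])
    (cons : ∀ a us ts, P us → P ts → P (node a us :: ts)) : ∀ ts, P ts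
  | [] => nil
  | node a us :: ts => cons a us ts (forest_induction nil cons us) (forest_induction nil cons ts)

@[simp] theorem labelsList_nil : labelsList [] = [] := by simp [labelsList]

@[simp] theorem labelsList_cons_node (a : ℕ) (us ts : List LTree) :
    labelsList (node a us :: ts) = a :: (labelsList us ++ labelsList ts) := by
  simp [labelsList, labels]

@[simp] theorem incrList_nil (a : ℕ) : IncrList a [] := by simp [IncrList]

@[simp] theorem incrList_cons_node (a b : ℕ) (us ts : List LTree) :
    IncrList a (node b us :: ts) ↔ a < b ∧ IncrList b us ∧ IncrList a ts := by
  simp [IncrList, Incr]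

@[simp] theorem rlenList_singleton (t : LTree) : rlenList [t] = 1 + rlen t := by
  simp [rlenList]

theorem rlenList_cons_of_ne_nil (t : LTree) {ts : List LTree} (h : ts ≠ []) :
    rlenList (t :: ts) = rlenList ts := by
  cases ts with
  | nil => exact absurd rfl h
  | cons u us => simp [rlenList]

theorem rlenList_cons (t : LTree) (ts : List LTree) :
    rlenList (t :: ts) = if ts = [] then 1 + rlen t else rlenList ts := by
  split_ifs with h
  · simp [h]
  · exact rlenList_cons_of_ne_nil t h

@[simp] theorem rlen_node (a : ℕ) (ts : List LTree) : rlen (node a ts) = rlenList ts := by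
  simp [rlen]

theorem rlenList_le_length (ts : List LTree) : rlenList ts ≤ (labelsList ts).length := by
  induction ts using forest_induction with
  | nil => simp [rlenList]
  | cons a us ts ihus ihts =>
    rw [rlenList_cons]
    split_ifs <;>
      simp only [rlen_node, labelsList_cons_node, List.length_cons, List.length_append] <;> omega

/-- Inserts a leaf labelled `m` at slot `i` of a forest with `N` vertices; the `2 * N + 1` slots
are the gaps of its contour word, numbered from the left (any `i > 2 * N` acts as `2 * N`). -/
def insertLeaf (m : ℕ) : ℕ → List LTree → List LTree
  | _, [] => [node m []]
  | i, node b us :: ts =>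
    if i = 0 then node m [] :: node b us :: ts
    else if i < 2 * (labelsList us).length + 2 then node b (insertLeaf m (i - 1) us) :: ts
    else node b us :: insertLeaf m (i - (2 * (labelsList us).length + 2)) ts

def eraseLeaf (m : ℕ) : List LTree → List LTree
  | [] => []
  | node b us :: ts =>
    if b = m then ts
    else if m ∈ labelsList us then node b (eraseLeaf m us) :: ts
    else node b us :: eraseLeaf m ts

def leafSlot (m : ℕ) : List LTree → ℕ
  | [] => 0
  | node b us :: ts =>
    if b = m then 0
    else if m ∈ labelsList us then leafSlot m us + 1
    else 2 * (labelsList us).length + 2 + leafSlot m ts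

section

variable (m : ℕ)

theorem insertLeaf_zero (ts : List LTree) : insertLeaf m 0 ts = node m [] :: ts := by
  cases ts with
  | nil => simp [insertLeaf]
  | cons t ts => obtain ⟨b, us⟩ := t; simp [insertLeaf]

theorem insertLeaf_ne_nil (i : ℕ) (ts : List LTree) : insertLeaf m i ts ≠ [] := by
  cases ts with
  | nil => simp [insertLeaf]
  | cons t ts => obtain ⟨b, us⟩ := t; simp only [insertLeaf]; split_ifs <;> simp

theorem labelsList_insertLeaf_perm (ts : List LTree) (i : ℕ) :
    (labelsList (insertLeaf m i ts)).Perm (m :: labelsList ts) := by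
  induction ts using forest_induction generalizing i with
  | nil => simp [insertLeaf]
  | cons b us ts ihus ihts =>
    simp only [insertLeaf]
    split_ifs
    · simp
    · simpa using ((ihus (i - 1)).append_right _).cons b |>.trans (.swap m b _)
    · simpa using ((ihts _).append_left (b :: labelsList us)).trans List.perm_middle

theorem incrList_insertLeaf {a : ℕ} (ham : a < m) {ts : List LTree}
    (hlt : ∀ x ∈ labelsList ts, x < m) (h : IncrList a ts) (i : ℕ) :
    IncrList a (insertLeaf m i ts) := by
  induction ts using forest_induction generalizing a i with
  | nil => simpa [insertLeaf] using ham
  | cons b us ts ihus ihts =>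
    simp only [labelsList_cons_node, List.mem_cons, List.mem_append] at hlt
    simp only [incrList_cons_node] at h
    simp only [insertLeaf]
    split_ifs
    · simp [ham, h]
    · simpa [h] using ihus (hlt b (by simp)) (fun x hx => hlt x (by simp [hx])) h.2.1 (i - 1)
    · simpa [h] using ihts ham (fun x hx => hlt x (by simp [hx])) h.2.2 _

/-- The rightmost-path length after inserting a leaf at slot `i` of a forest with `N` vertices
whose rightmost path has length `s`. -/
def rlenAfterInsert (N s i : ℕ) : ℕ := if 2 * N - s ≤ i then 2 * N - i + 1 else s

theorem rlenAfterInsert_of_lt {N s i : ℕ} (h : i < 2 * N - s) : rlenAfterInsert N s i = s := by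
  simp [rlenAfterInsert, not_le.2 h]

theorem rlenList_insertLeaf (ts : List LTree) {i : ℕ} (hi : i ≤ 2 * (labelsList ts).length) :
    rlenList (insertLeaf m i ts) = rlenAfterInsert (labelsList ts).length (rlenList ts) i := by
  induction ts using forest_induction generalizing i with
  | nil => simp_all [insertLeaf, rlenAfterInsert, rlenList]
  | cons b us ts ihus ihts =>
    have hus := rlenList_le_length us
    have hts := rlenList_le_length ts
    simp only [labelsList_cons_node, List.length_cons, List.length_append] at hi ⊢
    simp only [insertLeaf]
    split_ifs with h0 h1
    · have := rlenList_le_length (node b us :: ts)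
      simp only [labelsList_cons_node, List.length_cons, List.length_append] at this
      rw [rlenList_cons_of_ne_nil _ (List.cons_ne_nil _ _), rlenAfterInsert_of_lt (by omega)]
    · rcases eq_or_ne ts [] with rfl | hne
      · simp only [rlenList_singleton, rlen_node, ihus (show i - 1 ≤ _ by omega)]
        simp only [rlenAfterInsert, labelsList_nil, List.length_nil]
        split_ifs <;> omega
      · rw [rlenList_cons_of_ne_nil _ hne, rlenList_cons_of_ne_nil _ hne,
          rlenAfterInsert_of_lt (by omega)]
    · rw [rlenList_cons_of_ne_nil _ (insertLeaf_ne_nil m _ ts), ihts (by omega)]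
      rcases eq_or_ne ts [] with rfl | hne
      · simp only [rlenAfterInsert, rlenList_singleton, rlen_node, labelsList_nil, List.length_nil]
        split_ifs <;> omega
      · simp only [rlenAfterInsert, rlenList_cons_of_ne_nil _ hne]
        split_ifs <;> omega

theorem mem_labelsList_insertLeaf (ts : List LTree) (i : ℕ) :
    m ∈ labelsList (insertLeaf m i ts) :=
  (labelsList_insertLeaf_perm m ts i).mem_iff.2 (List.mem_cons_self ..)

theorem eraseLeaf_insertLeaf {ts : List LTree} (hm : m ∉ labelsList ts) {i : ℕ}
    (hi : i ≤ 2 * (labelsList ts).length) :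
    eraseLeaf m (insertLeaf m i ts) = ts ∧ leafSlot m (insertLeaf m i ts) = i := by
  induction ts using forest_induction generalizing i with
  | nil => simp_all [insertLeaf, eraseLeaf, leafSlot]
  | cons b us ts ihus ihts =>
    simp only [labelsList_cons_node, List.mem_cons, List.mem_append, not_or] at hm
    simp only [labelsList_cons_node, List.length_cons, List.length_append] at hi
    have hb : b ≠ m := Ne.symm hm.1
    simp only [insertLeaf]
    split_ifs with h0 h1
    · simp [eraseLeaf, leafSlot, h0]
    · obtain ⟨hrem, hpos⟩ := ihus hm.2.1 (i := i - 1) (by omega)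
      simp only [eraseLeaf, leafSlot, hb, if_false, mem_labelsList_insertLeaf, if_true, hrem, hpos,
        true_and]
      omega
    · obtain ⟨hrem, hpos⟩ := ihts hm.2.2 (i := i - (2 * (labelsList us).length + 2)) (by omega)
      simp only [eraseLeaf, leafSlot, hb, hm.2.1, if_false, hrem, hpos, true_and]
      omega

theorem incrList_eraseLeaf {a : ℕ} {ts : List LTree} (h : IncrList a ts) :
    IncrList a (eraseLeaf m ts) := by
  induction ts using forest_induction generalizing a with
  | nil => simp [eraseLeaf]
  | cons b us ts ihus ihts =>
    simp only [incrList_cons_node] at h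
    simp only [eraseLeaf]
    split_ifs
    · exact h.2.2
    · simpa [h] using ihus h.2.1
    · simpa [h] using ihts h.2.2

theorem insertLeaf_eraseLeaf {a : ℕ} {ts : List LTree} (h : IncrList a ts)
    (hle : ∀ x ∈ labelsList ts, x ≤ m) (hm : m ∈ labelsList ts) :
    insertLeaf m (leafSlot m ts) (eraseLeaf m ts) = ts ∧
      leafSlot m ts ≤ 2 * (labelsList (eraseLeaf m ts)).length := by
  induction ts using forest_induction generalizing a with
  | nil => simp at hm
  | cons b us ts ihus ihts =>
    simp only [incrList_cons_node] at h
    simp only [labelsList_cons_node, List.forall_mem_cons, List.forall_mem_append] at hle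
    simp only [labelsList_cons_node, List.mem_cons, List.mem_append] at hm
    by_cases hb : b = m
    · subst hb
      -- a vertex carrying the largest label is a leaf
      obtain rfl : us = [] := by
        rcases us with _ | ⟨⟨c, vs⟩, us⟩
        · rfl
        · have := hle.2.1 c (by simp)
          have := h.2.1
          simp only [incrList_cons_node] at this
          omega
      simp [eraseLeaf, leafSlot, insertLeaf_zero]
    · by_cases hmus : m ∈ labelsList us
      · obtain ⟨hins, hpos⟩ := ihus h.2.1 hle.2.1 hmus
        simp only [eraseLeaf, leafSlot, hb, hmus, if_false, if_true, insertLeaf,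
          labelsList_cons_node, List.length_cons, List.length_append]
        rw [if_neg (by omega), if_pos (by omega), Nat.add_sub_cancel, hins]
        exact ⟨rfl, by omega⟩
      · have hmts : m ∈ labelsList ts := by tauto
        obtain ⟨hins, hpos⟩ := ihts h.2.2 hle.2.2 hmts
        simp only [eraseLeaf, leafSlot, hb, hmus, if_false, insertLeaf, labelsList_cons_node,
          List.length_cons, List.length_append]
        rw [if_neg (by omega), if_neg (by omega), Nat.add_sub_cancel_left, hins]
        exact ⟨rfl, by omega⟩

end

/-- An increasing tree with `n` edges is `node 0 ts` for such a forest `ts`. -/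
def IsIncrForest (n : ℕ) (ts : List LTree) : Prop :=
  (labelsList ts).Perm (List.range' 1 n) ∧ IncrList 0 ts

theorem IsIncrForest.length_labelsList {n : ℕ} {ts : List LTree} (h : IsIncrForest n ts) :
    (labelsList ts).length = n := by
  simpa using h.1.length_eq

theorem IsIncrForest.rlenList_le {n : ℕ} {ts : List LTree} (h : IsIncrForest n ts) :
    rlenList ts ≤ n :=
  h.length_labelsList ▸ rlenList_le_length ts

theorem isIncrForest_zero_iff {ts : List LTree} : IsIncrForest 0 ts ↔ ts = [] := by
  constructor
  · rintro ⟨h, -⟩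
    rcases ts with _ | ⟨⟨b, us⟩, ts⟩
    · rfl
    · simpa using h.length_eq
  · rintro rfl
    simp [IsIncrForest]

theorem IsIncrForest.insertLeaf {n : ℕ} {ts : List LTree} (h : IsIncrForest n ts) (i : ℕ) :
    IsIncrForest (n + 1) (insertLeaf (n + 1) i ts) := by
  have hlt : ∀ x ∈ labelsList ts, x < n + 1 := fun x hx => by
    have := List.mem_range'_1.1 (h.1.mem_iff.1 hx)
    omega
  refine ⟨(labelsList_insertLeaf_perm _ ts i).trans ?_,
    incrList_insertLeaf _ n.succ_pos hlt h.2 i⟩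
  rw [List.range'_1_concat, add_comm 1 n]
  exact ((h.1.cons _).trans (List.perm_append_singleton _ _).symm)

theorem IsIncrForest.eraseLeaf {n : ℕ} {ts : List LTree} (h : IsIncrForest (n + 1) ts) :
    IsIncrForest n (eraseLeaf (n + 1) ts) ∧ leafSlot (n + 1) ts ≤ 2 * n ∧
      LTree.insertLeaf (n + 1) (leafSlot (n + 1) ts) (eraseLeaf (n + 1) ts) = ts := by
  have hmem : ∀ x, x ∈ labelsList ts ↔ 1 ≤ x ∧ x < n + 2 := fun x => by
    rw [h.1.mem_iff, List.mem_range'_1]; omega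
  obtain ⟨hins, hpos⟩ := insertLeaf_eraseLeaf (n + 1) h.2
    (fun x hx => by have := (hmem x).1 hx; omega) ((hmem _).2 (by omega))
  have hperm : (labelsList (LTree.eraseLeaf (n + 1) ts)).Perm (List.range' 1 n) := by
    have := (labelsList_insertLeaf_perm (n + 1) _ _).symm.trans (hins.symm ▸ h.1)
    rw [List.range'_1_concat, add_comm 1 n] at this
    exact (List.perm_cons _).1 (this.trans (List.perm_append_singleton _ _))
  refine ⟨⟨hperm, incrList_eraseLeaf _ h.2⟩, ?_, hins⟩
  simpa [hperm.length_eq] using hpos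

def incrForestSuccEquiv (n : ℕ) :
    {ts // IsIncrForest (n + 1) ts} ≃ {ts // IsIncrForest n ts} × Fin (2 * n + 1) where
  toFun ts := (⟨eraseLeaf (n + 1) ts, ts.2.eraseLeaf.1⟩,
    ⟨leafSlot (n + 1) ts, by have := ts.2.eraseLeaf.2.1; omega⟩)
  invFun p := ⟨insertLeaf (n + 1) p.2 p.1, p.1.2.insertLeaf _⟩
  left_inv ts := Subtype.ext ts.2.eraseLeaf.2.2
  right_inv p := by
    have hnot : n + 1 ∉ labelsList p.1.1 := fun hx => by
      have := List.mem_range'_1.1 (p.1.2.1.mem_iff.1 hx)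
      omega
    have h := eraseLeaf_insertLeaf (n + 1) hnot (i := p.2)
      (by have := p.2.2; rw [p.1.2.length_labelsList]; omega)
    exact Prod.ext (Subtype.ext h.1) (Fin.ext h.2)

instance (n : ℕ) : Finite {ts // IsIncrForest n ts} := by
  induction n with
  | zero =>
    have : Subsingleton {ts // IsIncrForest 0 ts} :=
      ⟨fun a b => Subtype.ext <| by
        rw [isIncrForest_zero_iff.1 a.2, isIncrForest_zero_iff.1 b.2]⟩
    infer_instance
  | succ n ih => exact Finite.of_equiv _ (incrForestSuccEquiv n).symm

noncomputable instance (n : ℕ) : Fintype {ts // IsIncrForest n ts} := Fintype.ofFinite _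

theorem sum_incrForest_succ {M : Type*} [AddCommMonoid M] (n : ℕ) (f : ℕ → M) :
    ∑ ts : {ts // IsIncrForest (n + 1) ts}, f (rlenList ts.1) =
      ∑ ts : {ts // IsIncrForest n ts}, ∑ i : Fin (2 * n + 1),
        f (rlenAfterInsert n (rlenList ts.1) i) := by
  rw [← (incrForestSuccEquiv n).symm.sum_comp, Fintype.sum_prod_type]
  refine Finset.sum_congr rfl fun ts _ => Finset.sum_congr rfl fun i _ => ?_
  have hi : (i : ℕ) ≤ 2 * (labelsList ts.1).length := by
    have := i.2; rw [ts.2.length_labelsList]; omega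
  simp only [incrForestSuccEquiv, Equiv.coe_fn_symm_mk, rlenList_insertLeaf _ _ hi,
    ts.2.length_labelsList]

theorem sum_rlenAfterInsert_ge_succ {n s : ℕ} (hs : s ≤ n) (k : ℕ) :
    ∑ i : Fin (2 * n + 1), (if k + 1 ≤ rlenAfterInsert n s i then 1 else 0) =
      (2 * n - k) * (if k + 1 ≤ s then 1 else 0) + (if k ≤ s then 1 else 0) := by
  rw [Fin.sum_univ_eq_sum_range (fun i => if k + 1 ≤ rlenAfterInsert n s i then 1 else 0),
    ← Finset.card_filter]
  rcases lt_trichotomy k s with hks | rfl | hsk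
  · rw [show (Finset.range (2 * n + 1)).filter (fun i => k + 1 ≤ rlenAfterInsert n s i) =
        Finset.range (2 * n - k + 1) by
      ext i; rw [Finset.mem_filter, Finset.mem_range, Finset.mem_range]; unfold rlenAfterInsert
      split_ifs <;> omega]
    rw [Finset.card_range, if_pos (Nat.succ_le_of_lt hks), if_pos hks.le]
    omega
  · rw [show (Finset.range (2 * n + 1)).filter (fun i => k + 1 ≤ rlenAfterInsert n k i) =
        {2 * n - k} by
      ext i; rw [Finset.mem_filter, Finset.mem_range, Finset.mem_singleton]; unfold rlenAfterInsert
      split_ifs <;> omega]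
    simp
  · rw [Finset.filter_false_of_mem fun i _ => by unfold rlenAfterInsert; split_ifs <;> omega]
    simp [show ¬k ≤ s by omega, show ¬k + 1 ≤ s by omega]

end LTree

open LTree

def rlenGeFormula (n k : ℕ) : ℕ := (2 * n - k).choose k * (2 * n - 2 * k - 1)‼

theorem rlenGeFormula_eq_zero_of_lt {n k : ℕ} (h : n < k) : rlenGeFormula n k = 0 := by
  simp [rlenGeFormula, Nat.choose_eq_zero_of_lt (show 2 * n - k < k by omega)]

theorem rlenGeFormula_zero_left (k : ℕ) : rlenGeFormula 0 k = if k = 0 then 1 else 0 := by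
  rcases Nat.eq_zero_or_pos k with rfl | hk
  · rfl
  · simp [rlenGeFormula_eq_zero_of_lt hk, hk.ne']

theorem rlenGeFormula_succ_zero (n : ℕ) :
    rlenGeFormula (n + 1) 0 = (2 * n + 1) * rlenGeFormula n 0 := by
  simp [rlenGeFormula, show 2 * (n + 1) - 1 = 2 * n + 1 by omega, Nat.doubleFactorial_add_one]

theorem rlenGeFormula_succ_succ (n k : ℕ) :
    rlenGeFormula (n + 1) (k + 1) = (2 * n - k) * rlenGeFormula n (k + 1) + rlenGeFormula n k := by
  rcases lt_trichotomy k n with hkn | rfl | hnk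
  · obtain ⟨m, rfl⟩ : ∃ m, n = k + 1 + m := ⟨n - (k + 1), by omega⟩
    set N := k + 2 * m + 1
    simp only [rlenGeFormula]
    rw [show 2 * (k + 1 + m + 1) - (k + 1) = N + 2 by omega,
      show 2 * (k + 1 + m + 1) - 2 * (k + 1) - 1 = 2 * m + 1 by omega,
      show 2 * (k + 1 + m) - k = N + 1 by omega, show 2 * (k + 1 + m) - (k + 1) = N by omega,
      show 2 * (k + 1 + m) - 2 * (k + 1) - 1 = 2 * m - 1 by omega,
      show 2 * (k + 1 + m) - 2 * k - 1 = 2 * m + 1 by omega, Nat.doubleFactorial_add_one,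
      Nat.choose_succ_succ' (N + 1) k]
    have absorb : (N + 1).choose (k + 1) * (2 * m + 1) = N.choose (k + 1) * (N + 1) := by
      rw [Nat.choose_mul_succ_eq, show N + 1 - (k + 1) = 2 * m + 1 by omega]
    calc ((N + 1).choose k + (N + 1).choose (k + 1)) * ((2 * m + 1) * (2 * m - 1)‼)
        = (N + 1).choose (k + 1) * (2 * m + 1) * (2 * m - 1)‼
          + (N + 1).choose k * ((2 * m + 1) * (2 * m - 1)‼) := by ring
      _ = _ := by rw [absorb]; ring
  · rw [rlenGeFormula_eq_zero_of_lt (Nat.lt_succ_self k)]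
    simp [rlenGeFormula, show 2 * (k + 1) - (k + 1) = k + 1 by omega, show 2 * k - k = k by omega]
  · simp [rlenGeFormula_eq_zero_of_lt hnk, rlenGeFormula_eq_zero_of_lt (show n < k + 1 by omega),
      rlenGeFormula_eq_zero_of_lt (show n + 1 < k + 1 by omega)]

noncomputable def rlenGeCount (n k : ℕ) : ℕ :=
  Nat.card {ts // IsIncrForest n ts ∧ k ≤ rlenList ts}

theorem rlenGeCount_eq_sum (n k : ℕ) :
    rlenGeCount n k = ∑ ts : {ts // IsIncrForest n ts}, if k ≤ rlenList ts.1 then 1 else 0 := by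
  rw [rlenGeCount,
    ← Nat.card_congr (Equiv.subtypeSubtypeEquivSubtypeInter _ fun ts => k ≤ rlenList ts),
    Nat.card_eq_fintype_card, Fintype.card_subtype, Finset.card_filter]

theorem rlenGeCount_zero_left (k : ℕ) : rlenGeCount 0 k = if k = 0 then 1 else 0 := by
  let : Unique {ts // IsIncrForest 0 ts} :=
    { default := ⟨[], isIncrForest_zero_iff.2 rfl⟩
      uniq := fun ts => Subtype.ext (isIncrForest_zero_iff.1 ts.2) }
  rw [rlenGeCount_eq_sum, Fintype.sum_unique]
  simp [show (default : {ts // IsIncrForest 0 ts}).1 = [] from rfl, rlenList]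

theorem rlenGeCount_succ_zero (n : ℕ) :
    rlenGeCount (n + 1) 0 = (2 * n + 1) * rlenGeCount n 0 := by
  rw [rlenGeCount_eq_sum, rlenGeCount_eq_sum,
    sum_incrForest_succ n fun r => if 0 ≤ r then 1 else 0]
  simp [mul_comm]

theorem rlenGeCount_succ_succ (n k : ℕ) :
    rlenGeCount (n + 1) (k + 1) = (2 * n - k) * rlenGeCount n (k + 1) + rlenGeCount n k := by
  simp only [rlenGeCount_eq_sum, sum_incrForest_succ n fun r => if k + 1 ≤ r then 1 else 0,
    sum_rlenAfterInsert_ge_succ (IsIncrForest.rlenList_le (Subtype.prop _)), Finset.sum_add_distrib,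
    Finset.mul_sum]

theorem rlenGeCount_eq_formula (n k : ℕ) : rlenGeCount n k = rlenGeFormula n k := by
  induction n generalizing k with
  | zero => rw [rlenGeCount_zero_left, rlenGeFormula_zero_left]
  | succ n ih =>
    cases k with
    | zero => rw [rlenGeCount_succ_zero, rlenGeFormula_succ_zero, ih]
    | succ k => rw [rlenGeCount_succ_succ, rlenGeFormula_succ_succ, ih, ih]

def childrenEquiv (n k : ℕ) :
    {T : LTree // (labels T).Perm (List.range (n + 1)) ∧ T.rootLabel = 0 ∧ Incr T ∧
      k ≤ rlen T} ≃
      {ts // IsIncrForest n ts ∧ k ≤ rlenList ts} where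
  toFun T := match T with
    | ⟨node a ts, hT⟩ => ⟨ts, by
      obtain ⟨hperm, rfl, hincr, hk⟩ := hT
      rw [List.range_eq_range', List.range'_succ] at hperm
      exact ⟨⟨(List.perm_cons 0).1 hperm, hincr⟩, hk⟩⟩
  invFun ts := ⟨node 0 ts.1, by
    obtain ⟨⟨hperm, hincr⟩, hk⟩ := ts.2
    refine ⟨?_, rfl, hincr, hk⟩
    rw [List.range_eq_range', List.range'_succ]
    exact hperm.cons 0⟩
  left_inv := by
    rintro ⟨⟨a, ts⟩, hT⟩
    obtain rfl : a = 0 := hT.2.1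
    rfl
  right_inv _ := rfl

theorem stmt19 (n k : ℕ) (hk : 1 ≤ k) (hkn : k ≤ n) :
    Nat.card {T : LTree // (LTree.labels T).Perm (List.range (n+1)) ∧
        T.rootLabel = 0 ∧ LTree.Incr T ∧ k ≤ LTree.rlen T}
      = (2*n-k).choose k * (2*n-2*k-1)‼ :=
  (Nat.card_congr (childrenEquiv n k)).trans (rlenGeCount_eq_formula n k)
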